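/- arXiv:1206.4910 — 2 statements merged into one kernel-verified Lean document; each statement's English description precedes it below -/
import Mathlib

section
/- Let n, k ≥ 1, let M' be an invertible real (n+k)×(n+k) upper triangular matrix, and set W' = (M')ᵀM'. Let N be the leading principal n×n submatrix of M' and set W = NᵀN. Let μ' ∈ ℝ^{n+k}, let μ ∈ ℝⁿ consist of the first n coordinates of μ', let z' = ((M')ᵀ)⁻¹μ', and let g ∈ ℝᵏ consist of the last k coordinates of z'. Then (μ')ᵀ(W')⁻¹μ' − μᵀW⁻¹μ = ‖g‖², where ‖·‖ is the Euclidean norm on ℝᵏ. -/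
/-!
Since `W'⁻¹ = M'⁻¹ (M'ᵀ)⁻¹`, the quadratic form `μ'ᵀ W'⁻¹ μ'` is `‖z'‖²` with `z' = (M'ᵀ)⁻¹ μ'`, and
likewise `μᵀ W⁻¹ μ = ‖z‖²` with `z = (Nᵀ)⁻¹ μ`. As `M'ᵀ` is lower triangular, the first `n` equations of
`M'ᵀ z' = μ'` involve only the first `n` coordinates of `z'` and read `Nᵀ z = μ`. So `z` is the head of
`z'`, and the difference of the two squared norms is the squared norm of the tail `g`.
-/

open Matrix

namespace Matrix

variable {R : Type*} [CommRing R]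

theorem dotProduct_inv_transpose_mul_self_mulVec {m : Type*} [Fintype m] [DecidableEq m]
    (A : Matrix m m R) (v : m → R) :
    v ⬝ᵥ ((Aᵀ * A)⁻¹ *ᵥ v) = (Aᵀ⁻¹ *ᵥ v) ⬝ᵥ (Aᵀ⁻¹ *ᵥ v) := by
  have hA : A⁻¹ = Aᵀ⁻¹ᵀ := by rw [← transpose_nonsing_inv, transpose_transpose]
  rw [mul_inv_rev, hA, ← mulVec_mulVec, dotProduct_mulVec, vecMul_transpose]

theorem IsUpperTriangular.isUnit_det_submatrix {m n : Type*} [Fintype m] [LinearOrder m]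
    [Fintype n] [LinearOrder n] {M : Matrix m m R} (hM : M.IsUpperTriangular)
    (hdet : IsUnit M.det) {f : n → m} (hf : StrictMono f) : IsUnit (M.submatrix f f).det := by
  have hsub : (M.submatrix f f).IsUpperTriangular := fun _ _ hij => hM (hf hij)
  rw [det_of_isUpperTriangular hM, IsUnit.prod_univ_iff] at hdet
  rw [det_of_isUpperTriangular hsub, IsUnit.prod_univ_iff]
  exact fun i => hdet (f i)

theorem IsUpperTriangular.transpose_submatrix_castAdd_mulVec {n k : ℕ}
    {M : Matrix (Fin (n + k)) (Fin (n + k)) R} (hM : M.IsUpperTriangular)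
    (z : Fin (n + k) → R) :
    (M.submatrix (Fin.castAdd k) (Fin.castAdd k))ᵀ *ᵥ (z ∘ Fin.castAdd k) =
      (Mᵀ *ᵥ z) ∘ Fin.castAdd k := by
  ext i
  have htail (j : Fin k) : M (Fin.natAdd n j) (Fin.castAdd k i) = 0 :=
    hM (by simp [Fin.lt_def]; omega)
  simp [mulVec, dotProduct, Fin.sum_univ_add, htail]

end Matrix

theorem stmt8_general (n k : ℕ)
    (M' : Matrix (Fin (n + k)) (Fin (n + k)) ℝ) (hMinv : IsUnit M'.det)
    (hMtri : ∀ i i' : Fin (n + k), i' < i → M' i i' = 0)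
    (μ' : Fin (n + k) → ℝ) :
    let N := M'.submatrix (Fin.castAdd k) (Fin.castAdd k)
    let W' := M'ᵀ * M'
    let W := Nᵀ * N
    let μ : Fin n → ℝ := fun i => μ' (Fin.castAdd k i)
    let z' := (M'ᵀ)⁻¹ *ᵥ μ'
    let g : EuclideanSpace ℝ (Fin k) := WithLp.toLp 2 (fun i => z' (Fin.natAdd n i))
    μ' ⬝ᵥ (W'⁻¹ *ᵥ μ') - μ ⬝ᵥ (W⁻¹ *ᵥ μ) = ‖g‖ ^ 2 := by
  intro N W' W μ z' g
  have hM : M'.IsUpperTriangular := fun i i' h => hMtri i i' h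
  have hNT : IsUnit Nᵀ.det := by
    rw [det_transpose]
    exact hM.isUnit_det_submatrix hMinv (Fin.strictMono_castAdd k)
  have hz' : M'ᵀ *ᵥ z' = μ' := by
    rw [mulVec_mulVec, mul_nonsing_inv _ (by rwa [det_transpose]), one_mulVec]
  have hz : Nᵀ⁻¹ *ᵥ μ = z' ∘ Fin.castAdd k := by
    have hNz : Nᵀ *ᵥ (z' ∘ Fin.castAdd k) = μ := by
      rw [hM.transpose_submatrix_castAdd_mulVec, hz']
      rfl
    rw [← hNz, mulVec_mulVec, nonsing_inv_mul _ hNT, one_mulVec]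
  rw [dotProduct_inv_transpose_mul_self_mulVec, dotProduct_inv_transpose_mul_self_mulVec, hz,
    EuclideanSpace.real_norm_sq_eq]
  simp only [dotProduct, Fin.sum_univ_add, Function.comp_apply, g, sq]
  ring

theorem stmt8 (n k : ℕ) (hn : 1 ≤ n) (hk : 1 ≤ k)
    (M' : Matrix (Fin (n + k)) (Fin (n + k)) ℝ) (hMinv : IsUnit M'.det)
    (hMtri : ∀ i i' : Fin (n + k), i' < i → M' i i' = 0)
    (μ' : Fin (n + k) → ℝ) :
    let N := M'.submatrix (Fin.castAdd k) (Fin.castAdd k)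
    let W' := M'ᵀ * M'
    let W := Nᵀ * N
    let μ : Fin n → ℝ := fun i => μ' (Fin.castAdd k i)
    let z' := (M'ᵀ)⁻¹ *ᵥ μ'
    let g : EuclideanSpace ℝ (Fin k) := WithLp.toLp 2 (fun i => z' (Fin.natAdd n i))
    μ' ⬝ᵥ (W'⁻¹ *ᵥ μ') - μ ⬝ᵥ (W⁻¹ *ᵥ μ) = ‖g‖ ^ 2 :=
  stmt8_general n k M' hMinv hMtri μ'
end

section
/- Let Λ : ℝ → ℝ be defined by Λ(x) = 2x for x ∈ [0, 1/2), Λ(x) = 2(1 − x) for x ∈ [1/2, 1], and Λ(x) = 0 otherwise. Define the 1-periodic Schauder system by ψ₁ ≡ 1 and, for j ≥ 1 and k = 1, …, 2^{j−1}, ψ_{2^{j−1}+k}(x) = Λ(2^{j−1}(x mod 1) − k + 1). Then for every j ≥ 1, the number of pairs (l, l') with 1 ≤ l ≤ l' ≤ 2^{j−1} such that the product function x ↦ ψ_l(x)ψ_{l'}(x) is not identically zero on [0, 1) equals 2^{j−1}(j − 1) + 1. -/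
/-!
On `[0, 1)` the function `ψ (2 ^ d + i + 1)` is nonzero exactly on the open dyadic interval
`(i / 2 ^ d, (i + 1) / 2 ^ d)`, and two open dyadic intervals meet only when one contains the
other. So for `l' = 2 ^ d' + i' + 1` the indices `l ≤ l'` with `ψ l ψ l'` not identically zero
are `1` and the `d' + 1` indices of the dyadic intervals containing that of `l'`, one in each
generation `d ≤ d'`. Summing `d + 2` over the `2 ^ d` indices of each generation `d < j - 1`,
plus `1` for `l' = 1`, gives `2 ^ (j - 1) * (j - 1) + 1`.
-/

/-- The "hat" function: `Λ(x) = 2x` on `[0, 1/2)`, `Λ(x) = 2(1-x)` on `[1/2, 1]`,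
and `Λ(x) = 0` otherwise. -/
noncomputable def hatLam (x : ℝ) : ℝ :=
  if 0 ≤ x ∧ x < 1 / 2 then 2 * x
  else if 1 / 2 ≤ x ∧ x ≤ 1 then 2 * (1 - x)
  else 0

theorem hatLam_ne_zero_iff {y : ℝ} : hatLam y ≠ 0 ↔ y ∈ Set.Ioo 0 1 := by
  rw [Set.mem_Ioo, hatLam]
  split_ifs with h₁ h₂
  · constructor
    · intro h
      exact ⟨h₁.1.lt_of_ne fun e => h (by rw [← e]; ring), by linarith [h₁.2]⟩
    · rintro ⟨hy, -⟩
      positivity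
  · constructor
    · intro h
      exact ⟨by linarith [h₂.1], h₂.2.lt_of_ne fun e => h (by rw [e]; ring)⟩
    · rintro ⟨-, hy⟩
      linarith
  · simp only [ne_eq, not_true_eq_false, false_iff, not_and, not_lt]
    intro hy
    by_contra! h
    by_cases hc : y < 1 / 2
    exacts [h₁ ⟨hy.le, hc⟩, h₂ ⟨not_lt.mp hc, h.le⟩]

def dyadicIoo (d i : ℕ) : Set ℝ := Set.Ioo (i / 2 ^ d) ((i + 1) / 2 ^ d)

theorem dyadicIoo_nonempty (d i : ℕ) : (dyadicIoo d i).Nonempty :=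
  Set.nonempty_Ioo.mpr (by gcongr; linarith)

theorem dyadicIoo_subset_Ico {d i : ℕ} (hi : i < 2 ^ d) : dyadicIoo d i ⊆ Set.Ico 0 1 := by
  rintro x ⟨hx₀, hx₁⟩
  have hi' : (i : ℝ) + 1 ≤ 2 ^ d := by exact_mod_cast hi
  refine ⟨le_trans (by positivity) hx₀.le, hx₁.trans_le ?_⟩
  rwa [div_le_one (by positivity)]

theorem div_two_pow_eq_mul_div_two_pow {d d' : ℕ} (h : d ≤ d') (a : ℝ) :
    a / 2 ^ d = a * 2 ^ (d' - d) / 2 ^ d' := by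
  rw [← Nat.sub_add_cancel h, pow_add, Nat.add_sub_cancel]
  field_simp

/-- Open dyadic intervals meet only when nested: the finer one lies in the coarser one. -/
theorem dyadicIoo_inter_nonempty_iff {d d' i i' : ℕ} (h : d ≤ d') :
    (dyadicIoo d i ∩ dyadicIoo d' i').Nonempty ↔ i = i' / 2 ^ (d' - d) := by
  have hpow : 0 < 2 ^ (d' - d) := by positivity
  rw [dyadicIoo, dyadicIoo, Set.Ioo_inter_Ioo, Set.nonempty_Ioo, max_lt_iff, lt_min_iff,
    lt_min_iff, div_two_pow_eq_mul_div_two_pow h (i : ℝ),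
    div_two_pow_eq_mul_div_two_pow h ((i : ℝ) + 1)]
  simp only [div_lt_div_iff_of_pos_right (by positivity : (0 : ℝ) < 2 ^ d')]
  norm_cast
  rw [eq_comm, Nat.div_eq_iff hpow, add_one_mul]
  generalize 2 ^ (d' - d) = p at hpow ⊢
  omega

/-- In the paper's notation `ψ_{2^{j-1}+k}` this is `j = d + 1`, `k = i + 1`. -/
def schauderIndex (d i : ℕ) : ℕ := 2 ^ d + i + 1

theorem one_lt_schauderIndex (d i : ℕ) : 1 < schauderIndex d i := by
  have : 0 < 2 ^ d := by positivity
  unfold schauderIndex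
  omega

theorem schauderIndex_lt_schauderIndex {d d' i i' : ℕ} (hd : d < d') (hi : i < 2 ^ d) :
    schauderIndex d i < schauderIndex d' i' := by
  have : 2 ^ (d + 1) ≤ 2 ^ d' := Nat.pow_le_pow_right two_pos hd
  rw [pow_succ] at this
  unfold schauderIndex
  omega

theorem exists_schauderIndex_eq {m : ℕ} (hm : 2 ≤ m) :
    ∃ d i, i < 2 ^ d ∧ schauderIndex d i = m := by
  have hlow : 2 ^ Nat.log 2 (m - 1) ≤ m - 1 := Nat.pow_log_le_self 2 (by omega)
  have hup : m - 1 < 2 ^ (Nat.log 2 (m - 1) + 1) := Nat.lt_pow_succ_log_self one_lt_two _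
  rw [pow_succ] at hup
  refine ⟨Nat.log 2 (m - 1), m - 1 - 2 ^ Nat.log 2 (m - 1), by omega, ?_⟩
  unfold schauderIndex
  omega

theorem div_two_pow_sub_lt_two_pow {d d' i : ℕ} (hi : i < 2 ^ d') :
    i / 2 ^ (d' - d) < 2 ^ d := by
  rw [Nat.div_lt_iff_lt_mul (by positivity), ← pow_add]
  exact hi.trans_le (Nat.pow_le_pow_right two_pos (by omega))

theorem strictMono_schauderIndex_ancestor {d' i' : ℕ} (hi' : i' < 2 ^ d') :
    StrictMono fun d => schauderIndex d (i' / 2 ^ (d' - d)) :=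
  strictMono_nat_of_lt_succ fun _ =>
    schauderIndex_lt_schauderIndex (Nat.lt_succ_self _) (div_two_pow_sub_lt_two_pow hi')

theorem ncard_pairs_eq_sum_ncard (P : ℕ → ℕ → Prop) (N : ℕ) :
    {p : ℕ × ℕ | 1 ≤ p.1 ∧ p.1 ≤ p.2 ∧ p.2 ≤ N ∧ P p.1 p.2}.ncard =
      ∑ b ∈ Finset.Icc 1 N, {a | 1 ≤ a ∧ a ≤ b ∧ P a b}.ncard := by
  classical
  have hpairs : {p : ℕ × ℕ | 1 ≤ p.1 ∧ p.1 ≤ p.2 ∧ p.2 ≤ N ∧ P p.1 p.2} =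
      ↑((Finset.Icc 1 N ×ˢ Finset.Icc 1 N).filter fun p => p.1 ≤ p.2 ∧ P p.1 p.2) := by
    ext p
    simp only [Set.mem_ofPred_eq, Finset.coe_filter, Finset.mem_product, Finset.mem_Icc]
    constructor
    · rintro ⟨h₁, h₂, h₃, hP⟩
      exact ⟨⟨⟨h₁, by omega⟩, by omega, h₃⟩, h₂, hP⟩
    · rintro ⟨⟨⟨h₁, -⟩, -, h₃⟩, h₂, hP⟩
      exact ⟨h₁, h₂, h₃, hP⟩
  rw [hpairs, Set.ncard_coe_finset, Finset.card_filter, Finset.sum_product_right]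
  refine Finset.sum_congr rfl fun b hb => ?_
  rw [← Finset.card_filter, ← Set.ncard_coe_finset]
  congr 1
  ext a
  simp only [Set.mem_ofPred_eq, Finset.coe_filter, Finset.mem_Icc] at hb ⊢
  constructor
  · rintro ⟨⟨h₁, -⟩, h₂, hP⟩
    exact ⟨h₁, h₂, hP⟩
  · rintro ⟨h₁, h₂, hP⟩
    exact ⟨⟨h₁, by omega⟩, h₂, hP⟩

theorem sum_Icc_one_eq_sum_range {M : Type*} [AddCommMonoid M] (f : ℕ → M) (m : ℕ) :
    ∑ b ∈ Finset.Icc 1 m, f b = ∑ b ∈ Finset.range m, f (b + 1) := by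
  rw [Finset.range_eq_Ico, Finset.sum_Ico_add', zero_add, Finset.Ico_add_one_right_eq_Icc]

theorem sum_Icc_one_two_pow {M : Type*} [AddCommMonoid M] (f : ℕ → M) (n : ℕ) :
    ∑ b ∈ Finset.Icc 1 (2 ^ n), f b =
      f 1 + ∑ d ∈ Finset.range n, ∑ i ∈ Finset.range (2 ^ d), f (schauderIndex d i) := by
  induction n with
  | zero => simp
  | succ n ih =>
    rw [sum_Icc_one_eq_sum_range, pow_succ, mul_two, Finset.sum_range_add,
      ← sum_Icc_one_eq_sum_range, ih, Finset.sum_range_succ, add_assoc]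
    rfl

theorem sum_range_two_pow_mul_add_two (n : ℕ) :
    ∑ d ∈ Finset.range n, 2 ^ d * (d + 2) = 2 ^ n * n := by
  induction n with
  | zero => simp
  | succ n ih =>
    rw [Finset.sum_range_succ, ih, pow_succ]
    ring

def Overlaps (ψ : ℕ → ℝ → ℝ) (a b : ℕ) : Prop := ∃ x ∈ Set.Ico (0 : ℝ) 1, ψ a x * ψ b x ≠ 0

theorem setOf_overlaps_one {ψ : ℕ → ℝ → ℝ} (hψ₁ : ∀ x : ℝ, ψ 1 x = 1) :
    {a | 1 ≤ a ∧ a ≤ 1 ∧ Overlaps ψ a 1} = {1} := by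
  ext a
  simp only [Set.mem_ofPred_eq, Set.mem_singleton_iff]
  constructor
  · rintro ⟨h₁, h₂, -⟩
    omega
  · rintro rfl
    exact ⟨le_rfl, le_rfl, 0, by simp, by simp [hψ₁]⟩

section Schauder

variable {ψ : ℕ → ℝ → ℝ}
  (hψ : ∀ j k : ℕ, 1 ≤ j → 1 ≤ k → k ≤ 2 ^ (j - 1) → ∀ x : ℝ,
      ψ (2 ^ (j - 1) + k) x = hatLam ((2 : ℝ) ^ (j - 1) * Int.fract x - (k : ℝ) + 1))

include hψ

theorem psi_schauderIndex {d i : ℕ} (hi : i < 2 ^ d) (x : ℝ) :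
    ψ (schauderIndex d i) x = hatLam (2 ^ d * Int.fract x - i) := by
  have h := hψ (d + 1) (i + 1) (by omega) (by omega) (by simpa using hi) x
  simp only [Nat.add_sub_cancel, ← add_assoc, Nat.cast_add, Nat.cast_one] at h
  rw [schauderIndex, h]
  ring_nf

theorem psi_schauderIndex_ne_zero_iff {d i : ℕ} (hi : i < 2 ^ d) {x : ℝ}
    (hx : x ∈ Set.Ico 0 1) : ψ (schauderIndex d i) x ≠ 0 ↔ x ∈ dyadicIoo d i := by
  have hpow : (0 : ℝ) < 2 ^ d := by positivity
  rw [psi_schauderIndex hψ hi, Int.fract_eq_self.mpr hx, hatLam_ne_zero_iff, dyadicIoo,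
    Set.mem_Ioo, Set.mem_Ioo, div_lt_iff₀ hpow, lt_div_iff₀ hpow]
  constructor <;> rintro ⟨h₁, h₂⟩ <;> constructor <;> linarith

theorem overlaps_schauderIndex_iff {d d' i i' : ℕ} (hi : i < 2 ^ d) (hi' : i' < 2 ^ d')
    (h : d ≤ d') :
    Overlaps ψ (schauderIndex d i) (schauderIndex d' i') ↔ i = i' / 2 ^ (d' - d) := by
  rw [← dyadicIoo_inter_nonempty_iff h, Overlaps]
  constructor
  · rintro ⟨x, hx, hne⟩
    exact ⟨x, (psi_schauderIndex_ne_zero_iff hψ hi hx).mp (left_ne_zero_of_mul hne),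
      (psi_schauderIndex_ne_zero_iff hψ hi' hx).mp (right_ne_zero_of_mul hne)⟩
  · rintro ⟨x, hx, hx'⟩
    have hx₀ := dyadicIoo_subset_Ico hi hx
    exact ⟨x, hx₀, mul_ne_zero ((psi_schauderIndex_ne_zero_iff hψ hi hx₀).mpr hx)
      ((psi_schauderIndex_ne_zero_iff hψ hi' hx₀).mpr hx')⟩

variable (hψ₁ : ∀ x : ℝ, ψ 1 x = 1)
include hψ₁

theorem overlaps_one {m : ℕ} (hm : 1 ≤ m) : Overlaps ψ 1 m := by
  obtain rfl | hm := hm.eq_or_lt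
  · exact ⟨0, by simp, by simp [hψ₁]⟩
  obtain ⟨d, i, hi, rfl⟩ := exists_schauderIndex_eq hm
  obtain ⟨x, hx⟩ := dyadicIoo_nonempty d i
  have hx₀ := dyadicIoo_subset_Ico hi hx
  exact ⟨x, hx₀, by rw [hψ₁, one_mul]; exact (psi_schauderIndex_ne_zero_iff hψ hi hx₀).mpr hx⟩

theorem setOf_overlaps_schauderIndex {d' i' : ℕ} (hi' : i' < 2 ^ d') :
    {a | 1 ≤ a ∧ a ≤ schauderIndex d' i' ∧ Overlaps ψ a (schauderIndex d' i')} =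
      insert 1 ((fun d => schauderIndex d (i' / 2 ^ (d' - d))) '' Set.Iic d') := by
  ext a
  simp only [Set.mem_ofPred_eq, Set.mem_insert_iff, Set.mem_image, Set.mem_Iic]
  constructor
  · rintro ⟨ha₁, hab, hover⟩
    obtain rfl | ha₂ := ha₁.eq_or_lt
    · exact Or.inl rfl
    obtain ⟨d, i, hi, rfl⟩ := exists_schauderIndex_eq ha₂
    have hd : d ≤ d' := not_lt.mp fun h => (schauderIndex_lt_schauderIndex h hi').not_ge hab
    exact Or.inr ⟨d, hd, by rw [← (overlaps_schauderIndex_iff hψ hi hi' hd).mp hover]⟩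
  · rintro (rfl | ⟨d, hd, rfl⟩)
    · have h := (one_lt_schauderIndex d' i').le
      exact ⟨le_rfl, h, overlaps_one hψ hψ₁ h⟩
    refine ⟨(one_lt_schauderIndex _ _).le, ?_,
      (overlaps_schauderIndex_iff hψ (div_two_pow_sub_lt_two_pow hi') hi' hd).mpr rfl⟩
    obtain rfl | hd := hd.eq_or_lt
    · simp
    · exact (schauderIndex_lt_schauderIndex hd (div_two_pow_sub_lt_two_pow hi')).le

theorem ncard_setOf_overlaps_schauderIndex {d' i' : ℕ} (hi' : i' < 2 ^ d') :
    {a | 1 ≤ a ∧ a ≤ schauderIndex d' i' ∧ Overlaps ψ a (schauderIndex d' i')}.ncard =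
      d' + 2 := by
  have hone : 1 ∉ (fun d => schauderIndex d (i' / 2 ^ (d' - d))) '' Set.Iic d' := by
    rintro ⟨d, -, h⟩
    exact (one_lt_schauderIndex _ _).ne' h
  rw [setOf_overlaps_schauderIndex hψ hψ₁ hi', Set.ncard_insert_of_notMem hone
    ((Set.finite_Iic d').image _), Set.ncard_image_of_injective _
    (strictMono_schauderIndex_ancestor hi').injective, ← Finset.coe_Iic, Set.ncard_coe_finset,
    Nat.card_Iic]

end Schauder

theorem stmt13_general (ψ : ℕ → ℝ → ℝ)
    (hψ1 : ∀ x : ℝ, ψ 1 x = 1)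
    (hψ : ∀ j k : ℕ, 1 ≤ j → 1 ≤ k → k ≤ 2 ^ (j - 1) → ∀ x : ℝ,
      ψ (2 ^ (j - 1) + k) x =
        hatLam ((2 : ℝ) ^ (j - 1) * Int.fract x - (k : ℝ) + 1))
    (j : ℕ) :
    Set.ncard {p : ℕ × ℕ | 1 ≤ p.1 ∧ p.1 ≤ p.2 ∧ p.2 ≤ 2 ^ (j - 1) ∧
        ∃ x ∈ Set.Ico (0 : ℝ) 1, ψ p.1 x * ψ p.2 x ≠ 0} =
      2 ^ (j - 1) * (j - 1) + 1 := by
  have hcolumns : ∀ d ∈ Finset.range (j - 1), ∑ i ∈ Finset.range (2 ^ d),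
      {a | 1 ≤ a ∧ a ≤ schauderIndex d i ∧ Overlaps ψ a (schauderIndex d i)}.ncard =
        2 ^ d * (d + 2) := fun d _ => by
    rw [Finset.sum_congr rfl fun i hi => ncard_setOf_overlaps_schauderIndex hψ hψ1
      (Finset.mem_range.mp hi), Finset.sum_const, Finset.card_range, smul_eq_mul]
  refine (ncard_pairs_eq_sum_ncard (Overlaps ψ) _).trans ?_
  rw [sum_Icc_one_two_pow, setOf_overlaps_one hψ1,
    Set.ncard_singleton, Finset.sum_congr rfl hcolumns, sum_range_two_pow_mul_add_two, add_comm]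

theorem stmt13 (ψ : ℕ → ℝ → ℝ)
    (hψ1 : ∀ x : ℝ, ψ 1 x = 1)
    (hψ : ∀ j k : ℕ, 1 ≤ j → 1 ≤ k → k ≤ 2 ^ (j - 1) → ∀ x : ℝ,
      ψ (2 ^ (j - 1) + k) x =
        hatLam ((2 : ℝ) ^ (j - 1) * Int.fract x - (k : ℝ) + 1))
    (j : ℕ) (hj : 1 ≤ j) :
    Set.ncard {p : ℕ × ℕ | 1 ≤ p.1 ∧ p.1 ≤ p.2 ∧ p.2 ≤ 2 ^ (j - 1) ∧
        ∃ x ∈ Set.Ico (0 : ℝ) 1, ψ p.1 x * ψ p.2 x ≠ 0} =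
      2 ^ (j - 1) * (j - 1) + 1 :=
  stmt13_general ψ hψ1 hψ j
end
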